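/- arXiv:2303.07444 — 2 statements merged into one kernel-verified Lean document; each statement's English description precedes it below -/
import Mathlib

section
/- Let G be the intersection graph of a finite family of closed disks in the Euclidean plane ℝ², all having the same radius. Then the layered tree-independence number of G is at most 8. -/
open Classical

/-- A tree decomposition of a graph `G`. -/
structure TreeDecomp {V : Type*} (G : SimpleGraph V) where
  ι : Type
  fin : Fintype ι
  T : SimpleGraph ι
  isTree : T.IsTree
  bag : ι → Set V
  mem_bag : ∀ v : V, ∃ t, v ∈ bag t
  edge_bag : ∀ ⦃u v : V⦄, G.Adj u v → ∃ t, u ∈ bag t ∧ v ∈ bag t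
  bag_connected : ∀ v : V, (T.induce {t | v ∈ bag t}).Connected

/-- `I` is an independent set of `G` contained in `S`, i.e. an independent set of `G[S]`. -/
def IsIndepSetIn {V : Type*} (G : SimpleGraph V) (S : Set V) (I : Finset V) : Prop :=
  ↑I ⊆ S ∧ ∀ u ∈ I, ∀ v ∈ I, u ≠ v → ¬ G.Adj u v

/-- `α(G[S]) ≤ k`. -/
def IndepLE {V : Type*} (G : SimpleGraph V) (S : Set V) (k : ℕ) : Prop :=
  ∀ I : Finset V, IsIndepSetIn G S I → I.card ≤ k

/-- The independence number of the tree decomposition is at most `k`. -/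
def TreeDecomp.IndepNumLE {V : Type*} {G : SimpleGraph V} (td : TreeDecomp G) (k : ℕ) : Prop :=
  ∀ t : td.ι, IndepLE G (td.bag t) k

/-- The tree-independence number of `G` is at most `k`. -/
def treeAlphaLE {V : Type*} (G : SimpleGraph V) (k : ℕ) : Prop :=
  ∃ td : TreeDecomp G, td.IndepNumLE k

/-- The tree-independence number of `G`. -/
noncomputable def treeAlpha {V : Type*} (G : SimpleGraph V) : ℕ :=
  sInf {k | treeAlphaLE G k}

/-- A layering of `G`, encoded by the function sending a vertex to the index of its layer. -/
def IsLayering {V : Type*} (G : SimpleGraph V) (L : V → ℕ) : Prop :=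
  ∀ ⦃u v : V⦄, G.Adj u v → (L u : ℤ) ≤ (L v : ℤ) + 1

/-- The layered tree-independence number of `G` is at most `k`. -/
def layeredTreeAlphaLE {V : Type*} (G : SimpleGraph V) (k : ℕ) : Prop :=
  ∃ (td : TreeDecomp G) (L : V → ℕ), IsLayering G L ∧
    ∀ (t : td.ι) (i : ℕ), IndepLE G (td.bag t ∩ {v | L v = i}) k

/-- The layered tree-independence number of `G`. -/
noncomputable def layeredTreeAlpha {V : Type*} (G : SimpleGraph V) : ℕ :=
  sInf {k | layeredTreeAlphaLE G k}

/-- The number of elements of the multiset `𝒞` containing `v` (with multiplicity). -/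
noncomputable def coverCount {V : Type*} (𝒞 : Multiset (Set V)) (v : V) : ℕ :=
  Multiset.countP (fun C => v ∈ C) 𝒞

/-- `𝒞` is a `β`-general cover: every vertex belongs to at least `β·|𝒞|` elements. -/
def IsGeneralCover {V : Type*} (β : ℝ) (𝒞 : Multiset (Set V)) : Prop :=
  𝒞 ≠ 0 ∧ ∀ v : V, β * (Multiset.card 𝒞 : ℝ) ≤ (coverCount 𝒞 v : ℝ)

/-- The intersection graph of an (indexed) family of sets. -/
def intersectionGraph {ι : Type*} {α : Type*} (D : ι → Set α) : SimpleGraph ι where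
  Adj i j := i ≠ j ∧ (D i ∩ D j).Nonempty
  symm := by
    constructor
    rintro i j ⟨hne, x, hx1, hx2⟩
    exact ⟨hne.symm, x, hx2, hx1⟩
  loopless := by
    constructor
    rintro i ⟨hne, -⟩
    exact hne rfl

/-- The `p`-th power of a graph. -/
def gpower {V : Type*} (G : SimpleGraph V) (p : ℕ) : SimpleGraph V where
  Adj u v := u ≠ v ∧ ∃ w : G.Walk u v, w.length ≤ p
  symm := by
    constructor
    rintro u v ⟨hne, w, hw⟩
    exact ⟨hne.symm, w.reverse, by simpa using hw⟩
  loopless := by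
    constructor
    rintro u ⟨hne, -⟩
    exact hne rfl

/-- The axis-aligned closed hypercube of side length `r` with lower corner `x`. -/
def cube (d : ℕ) (x : EuclideanSpace ℝ (Fin d)) (r : ℝ) : Set (EuclideanSpace ℝ (Fin d)) :=
  {y | ∀ i, x i ≤ y i ∧ y i ≤ x i + r}

/-- The size of an object: the side length of its smallest enclosing axis-aligned hypercube. -/
noncomputable def objSize (d : ℕ) (O : Set (EuclideanSpace ℝ (Fin d))) : ℝ :=
  sInf {r : ℝ | 0 ≤ r ∧ ∃ x, O ⊆ cube d x r}

/-- The collection `O` is `c`-fat. -/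
def IsFat {ι : Type*} (d : ℕ) (c : ℝ) (O : ι → Set (EuclideanSpace ℝ (Fin d))) : Prop :=
  ∀ r : ℝ, 0 < r → ∀ x : EuclideanSpace ℝ (Fin d), ∀ P : Finset ι,
    (∀ i ∈ P, ∀ j ∈ P, i ≠ j → Disjoint (O i) (O j)) →
    (∀ i ∈ P, (O i ∩ cube d x r).Nonempty ∧ r ≤ objSize d (O i)) →
    ∃ pts : Finset (EuclideanSpace ℝ (Fin d)),
      (pts.card : ℝ) ≤ c ∧ ∀ i ∈ P, ∃ p ∈ pts, p ∈ O i

/-- The `n`-dimensional grid graph of width `n`. -/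
def gridGraphN (n : ℕ) : SimpleGraph (Fin n → Fin n) where
  Adj a b := ∑ i, ((a i : ℤ) - (b i : ℤ)).natAbs = 1
  symm := by
    constructor
    intro a b h
    beta_reduce at h ⊢
    rw [← h]
    exact Finset.sum_congr rfl fun i _ => by omega
  loopless := by
    constructor
    intro a h
    simp at h

/-- The grid graph on `ℤ²`. -/
def latticeGraph : SimpleGraph (ℤ × ℤ) where
  Adj p q := (p.1 - q.1).natAbs + (p.2 - q.2).natAbs = 1
  symm := by
    constructor
    intro p q h
    beta_reduce at h ⊢
    omega
  loopless := by
    constructor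
    intro p h
    simp at h

/-- `P` is (the vertex set of) a path on the integer grid: a finite nonempty subset of `ℤ²`
whose induced subgraph in the grid graph is a path. -/
def IsGridPath (P : Set (ℤ × ℤ)) : Prop :=
  P.Finite ∧ P.Nonempty ∧ (latticeGraph.induce P).IsTree ∧
    ∀ v : P, ((latticeGraph.induce P).neighborSet v).ncard ≤ 2

/-!
Cut the plane into square cells of side `ρ`. Two disks whose centres lie in the same cell meet
(the centres are at distance `< √2 ρ`), while the centres of two meeting disks are at distance
`≤ 2ρ`, so their cell coordinates differ by at most `2`. Hence after merging cells in pairs, a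
disk only meets disks in the same or a neighbouring coarse column, resp. coarse row. Bags made of
two consecutive coarse columns, arranged along a path, then form a tree decomposition, and the
coarse rows form a layering. A bag meets a layer in a block of `4 × 2` cells, and an independent
set has at most one centre per cell.
-/

namespace SimpleGraph

lemma pathGraph_mem_edges_of_walk {n : ℕ} {v w : Fin n} (hvw : (v : ℕ) + 1 = w) {a b : Fin n}
    (p : (pathGraph n).Walk a b) (ha : (a : ℕ) ≤ v) (hb : (w : ℕ) ≤ b) : s(v, w) ∈ p.edges := by
  induction p with
  | nil => omega
  | @cons x y z hxy q ih =>
    rw [pathGraph_adj] at hxy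
    rw [Walk.edges_cons, List.mem_cons]
    by_cases hstep : x = v ∧ y = w
    · exact Or.inl (by rw [hstep.1, hstep.2])
    · have : ¬((x : ℕ) = v ∧ (y : ℕ) = w) := fun h => hstep ⟨Fin.ext h.1, Fin.ext h.2⟩
      exact Or.inr (ih (by omega) hb)

lemma pathGraph_isTree (n : ℕ) : (pathGraph (n + 1)).IsTree := by
  refine ⟨pathGraph_connected n, isAcyclic_iff_forall_adj_isBridge.2 fun v w hvw => ?_⟩
  refine isBridge_iff_forall_walk_mem_edges.2 fun p => ?_
  rcases pathGraph_adj.1 hvw with h | h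
  · exact pathGraph_mem_edges_of_walk h p le_rfl le_rfl
  · simpa [Sym2.eq_swap] using pathGraph_mem_edges_of_walk h p.reverse le_rfl le_rfl

end SimpleGraph

lemma IndepLE.mono {V : Type*} {G : SimpleGraph V} {S S' : Set V} {k : ℕ} (hS : S ⊆ S')
    (h : IndepLE G S' k) : IndepLE G S k :=
  fun I hI => h I ⟨hI.1.trans hS, hI.2⟩

section Layered

open SimpleGraph

variable {V : Type*} [Finite V] {G : SimpleGraph V}

lemma exists_bounds_of_finite (f : V → ℤ) : ∃ (m : ℤ) (N : ℕ), ∀ v, m ≤ f v ∧ f v ≤ m + N := by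
  obtain ⟨m, hm⟩ := Finite.bddBelow_range f
  obtain ⟨M, hM⟩ := Finite.bddAbove_range f
  refine ⟨m, (M - m).toNat, fun v => ?_⟩
  have := hm ⟨v, rfl⟩
  have := hM ⟨v, rfl⟩
  omega

theorem exists_treeDecomp_of_adj_le (f : V → ℤ) (hf : ∀ ⦃u v⦄, G.Adj u v → f u ≤ f v + 1) :
    ∃ td : TreeDecomp G, ∀ t, ∃ a : ℤ, td.bag t ⊆ {v | a ≤ f v ∧ f v ≤ a + 1} := by
  obtain ⟨m, N, hbd⟩ := exists_bounds_of_finite f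
  refine ⟨⟨Fin (N + 1), inferInstance, pathGraph (N + 1), pathGraph_isTree N,
      fun t => {v | m + t ≤ f v ∧ f v ≤ m + t + 1}, fun v => ?_, fun u v huv => ?_, fun v => ?_⟩,
    fun t => ⟨m + t, subset_rfl⟩⟩
  · have := hbd v
    exact ⟨⟨(f v - m).toNat, by omega⟩, by simp only [Set.mem_ofPred_eq]; omega⟩
  · have := hbd u
    have := hbd v
    have := hf huv
    have := hf huv.symm
    exact ⟨⟨(min (f u) (f v) - m).toNat, by omega⟩, by simp only [Set.mem_ofPred_eq]; omega,
      by simp only [Set.mem_ofPred_eq]; omega⟩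
  · have := hbd v
    refine (connected_iff _).2 ⟨fun ⟨a, ha⟩ ⟨b, hb⟩ => ?_, ⟨⟨(f v - m).toNat, by omega⟩, ?_⟩⟩
    · simp only [Set.mem_ofPred_eq] at ha hb
      rcases eq_or_ne a b with rfl | hab
      · rfl
      · have : (a : ℕ) ≠ b := Fin.val_ne_of_ne hab
        exact Adj.reachable (show (pathGraph (N + 1)).Adj a b from pathGraph_adj.2 (by omega))
    · simp only [Set.mem_ofPred_eq]
      omega

theorem exists_isLayering_of_adj_le (g : V → ℤ) (hg : ∀ ⦃u v⦄, G.Adj u v → g u ≤ g v + 1) :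
    ∃ L : V → ℕ, IsLayering G L ∧ ∀ i, ∃ b : ℤ, ∀ v, L v = i → g v = b := by
  obtain ⟨m, _, hbd⟩ := exists_bounds_of_finite g
  refine ⟨fun v => (g v - m).toNat, fun u v huv => ?_,
    fun i => ⟨m + i, fun v (hv : (g v - m).toNat = i) => ?_⟩⟩
  · have := hbd u
    have := hbd v
    have := hg huv
    show ((g u - m).toNat : ℤ) ≤ (g v - m).toNat + 1
    omega
  · have := hbd v
    omega

theorem layeredTreeAlphaLE_of_adj_le (f g : V → ℤ) (hf : ∀ ⦃u v⦄, G.Adj u v → f u ≤ f v + 1)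
    (hg : ∀ ⦃u v⦄, G.Adj u v → g u ≤ g v + 1) {k : ℕ}
    (hblock : ∀ a b : ℤ, IndepLE G {v | a ≤ f v ∧ f v ≤ a + 1 ∧ g v = b} k) :
    layeredTreeAlphaLE G k := by
  obtain ⟨td, htd⟩ := exists_treeDecomp_of_adj_le f hf
  obtain ⟨L, hL, hLg⟩ := exists_isLayering_of_adj_le g hg
  refine ⟨td, L, hL, fun t i => ?_⟩
  obtain ⟨a, ha⟩ := htd t
  obtain ⟨b, hb⟩ := hLg i
  exact (hblock a b).mono fun v hv => show _ ∧ _ ∧ _ from ⟨(ha hv.1).1, (ha hv.1).2, hb v hv.2⟩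

theorem layeredTreeAlphaLE_eight_of_cell (c : V → ℤ × ℤ)
    (hsame : ∀ ⦃u v⦄, u ≠ v → c u = c v → G.Adj u v)
    (hnear : ∀ ⦃u v⦄, G.Adj u v → (c u).1 ≤ (c v).1 + 2 ∧ (c u).2 ≤ (c v).2 + 2) :
    layeredTreeAlphaLE G 8 := by
  refine layeredTreeAlphaLE_of_adj_le (fun v => (c v).1 / 2) (fun v => (c v).2 / 2)
    (fun u v huv => by have := hnear huv; omega) (fun u v huv => by have := hnear huv; omega)
    fun a b I ⟨hsub, hind⟩ => ?_
  have hmaps : ∀ v ∈ I, c v ∈ Finset.Icc (2 * a) (2 * a + 3) ×ˢ Finset.Icc (2 * b) (2 * b + 1) := by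
    intro v hv
    have := hsub hv
    simp only [Set.mem_ofPred_eq] at this
    simp only [Finset.mem_product, Finset.mem_Icc]
    omega
  have hinj : Set.InjOn c I := fun u hu v hv huv =>
    by_contra fun hne => hind u hu v hv hne (hsame hne huv)
  calc I.card ≤ _ := Finset.card_le_card_of_injOn c hmaps hinj
    _ = 8 := by
      rw [Finset.card_product, Int.card_Icc, Int.card_Icc,
        show 2 * a + 3 + 1 - 2 * a = 4 by ring, show 2 * b + 1 + 1 - 2 * b = 2 by ring]
      rfl

end Layered

section Disks

noncomputable def gridCell (ρ : ℝ) (p : EuclideanSpace ℝ (Fin 2)) : ℤ × ℤ :=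
  (⌊p 0 / ρ⌋, ⌊p 1 / ρ⌋)

variable {ρ : ℝ} {p q : EuclideanSpace ℝ (Fin 2)}

lemma abs_sub_lt_of_floor_div_eq {x y : ℝ} (hρ : 0 < ρ) (h : ⌊x / ρ⌋ = ⌊y / ρ⌋) :
    |x - y| < ρ := by
  have := Int.abs_sub_lt_one_of_floor_eq_floor h
  rwa [← sub_div, abs_div, abs_of_pos hρ, div_lt_one hρ] at this

lemma floor_div_le_add_two {x y : ℝ} (hρ : 0 < ρ) (h : x - y ≤ 2 * ρ) :
    ⌊x / ρ⌋ ≤ ⌊y / ρ⌋ + 2 := by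
  have : (x - y) / ρ ≤ 2 := (div_le_iff₀ hρ).2 (by linarith)
  rw [sub_div] at this
  calc ⌊x / ρ⌋ ≤ ⌊y / ρ + 2⌋ := Int.floor_mono (by linarith)
    _ = ⌊y / ρ⌋ + 2 := Int.floor_add_ofNat _ 2

lemma dist_lt_of_gridCell_eq (hρ : 0 < ρ) (h : gridCell ρ p = gridCell ρ q) :
    dist p q < 2 * ρ := by
  have h0 := abs_sub_lt_of_floor_div_eq hρ (congrArg Prod.fst h)
  have h1 := abs_sub_lt_of_floor_div_eq hρ (congrArg Prod.snd h)
  rw [EuclideanSpace.dist_eq, Real.sqrt_lt' (by positivity), Fin.sum_univ_two,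
    Real.dist_eq, Real.dist_eq]
  nlinarith [sq_abs (p 0 - q 0), sq_abs (p 1 - q 1), abs_nonneg (p 0 - q 0),
    abs_nonneg (p 1 - q 1)]

lemma gridCell_le_add_two (hρ : 0 < ρ) (h : dist p q ≤ 2 * ρ) :
    (gridCell ρ p).1 ≤ (gridCell ρ q).1 + 2 ∧ (gridCell ρ p).2 ≤ (gridCell ρ q).2 + 2 := by
  have hcoord (i : Fin 2) : p i - q i ≤ 2 * ρ :=
    (le_abs_self _).trans ((Real.dist_eq _ _ ▸ PiLp.dist_apply_le p q i).trans h)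
  exact ⟨floor_div_le_add_two hρ (hcoord 0), floor_div_le_add_two hρ (hcoord 1)⟩

lemma closedBall_inter_closedBall_nonempty (h : dist p q ≤ 2 * ρ) :
    (Metric.closedBall p ρ ∩ Metric.closedBall q ρ).Nonempty := by
  refine ⟨midpoint ℝ p q, ?_, ?_⟩
  · rw [Metric.mem_closedBall, dist_comm, dist_left_midpoint, Real.norm_two]
    linarith
  · rw [Metric.mem_closedBall, dist_comm, dist_right_midpoint, Real.norm_two]
    linarith

end Disks

/-- The intersection graph of a finite family of closed disks in `ℝ²` of a common
radius has layered tree-independence number at most `8`. -/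
theorem stmt5 {ι : Type} [Fintype ι] (ρ : ℝ) (hρ : 0 < ρ)
    (ctr : ι → EuclideanSpace ℝ (Fin 2)) :
    layeredTreeAlpha (intersectionGraph fun i => Metric.closedBall (ctr i) ρ) ≤ 8 :=
  Nat.sInf_le <| layeredTreeAlphaLE_eight_of_cell (fun i => gridCell ρ (ctr i))
    (fun _ _ hne h => ⟨hne, closedBall_inter_closedBall_nonempty (dist_lt_of_gridCell_eq hρ h).le⟩)
    (fun _ _ h => gridCell_le_add_two hρ
      ((Metric.dist_le_add_of_nonempty_closedBall_inter_closedBall h.2).trans_eq (two_mul ρ).symm))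
end

section
/- Every finite collection of closed Euclidean balls in ℝ^d (d ≥ 2) is (3^d · d!)-fat; in particular, for every r > 0 and every axis-aligned closed hypercube R of side length r, any subcollection of pairwise disjoint balls from the collection, each of diameter at least r and each intersecting R, has at most 3^d · d! members. -/
open Classical

/-!
Shrink every ball to a ball of radius `r / 2` inside it that still meets the cube `R`. The
shrunken balls are pairwise disjoint, so their centres are more than `r` apart, and they lie in
the cube of side `2r` concentric with `R`. Cutting that cube into `k ^ d` subcubes with
`k = ⌈2√d⌉`, each subcube has diameter at most `r` and hence contains at most one centre. Finally
`k ^ d ≤ (3√d) ^ d ≤ 3 ^ d · d!`, because `d ^ d ≤ d! ^ 2`. For fatness, the centres of the balls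
serve as the piercing points.
-/

open Finset in
theorem Nat.pow_self_le_factorial_sq (n : ℕ) : n ^ n ≤ n.factorial ^ 2 := by
  have h_rev : ∏ i ∈ range n, (n - i) = n.factorial := by
    rw [← prod_range_add_one_eq_factorial, ← prod_range_reflect]
    exact prod_congr rfl fun i hi => by rw [mem_range] at hi; omega
  calc n ^ n = ∏ _i ∈ range n, n := by simp
    _ ≤ ∏ i ∈ range n, (i + 1) * (n - i) := by
        refine prod_le_prod' fun i hi => ?_
        rw [mem_range] at hi
        nlinarith [Nat.sub_add_cancel hi.le]
    _ = n.factorial ^ 2 := by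
        rw [prod_mul_distrib, prod_range_add_one_eq_factorial, h_rev, sq]

theorem Real.sqrt_pow_self_le_factorial (n : ℕ) : √(n : ℝ) ^ n ≤ n.factorial := by
  rw [← pow_le_pow_iff_left₀ (by positivity) (by positivity) two_ne_zero, ← pow_mul, mul_comm,
    pow_mul, Real.sq_sqrt n.cast_nonneg]
  exact_mod_cast Nat.pow_self_le_factorial_sq n

theorem ceil_two_mul_sqrt_pow_le {d : ℕ} (hd : 1 ≤ d) :
    (⌈2 * √(d : ℝ)⌉₊ : ℝ) ^ d ≤ 3 ^ d * d.factorial := by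
  have h_one : 1 ≤ √(d : ℝ) := Real.one_le_sqrt.2 (by exact_mod_cast hd)
  calc (⌈2 * √(d : ℝ)⌉₊ : ℝ) ^ d ≤ (3 * √d) ^ d := by
        gcongr
        linarith [Nat.ceil_lt_add_one (by positivity : (0 : ℝ) ≤ 2 * √d)]
    _ = 3 ^ d * √d ^ d := mul_pow _ _ _
    _ ≤ 3 ^ d * d.factorial := by gcongr; exact Real.sqrt_pow_self_le_factorial d

theorem exists_closedBall_subset_closedBall_of_mem {E : Type*} [NormedAddCommGroup E]
    [NormedSpace ℝ E] {c q : E} {ρ s : ℝ} (hq : q ∈ Metric.closedBall c ρ) (hs : 0 ≤ s)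
    (hsρ : s ≤ ρ) :
    ∃ c', q ∈ Metric.closedBall c' s ∧ Metric.closedBall c' s ⊆ Metric.closedBall c ρ := by
  rw [Metric.mem_closedBall] at hq
  rcases (hs.trans hsρ).eq_or_lt with rfl | hρ
  · obtain rfl : s = 0 := le_antisymm hsρ hs
    exact ⟨q, Metric.mem_closedBall_self le_rfl,
      Metric.closedBall_subset_closedBall' (by simpa using hq)⟩
  have ht₀ : 0 ≤ s / ρ := by positivity
  have ht₁ : s / ρ ≤ 1 := div_le_one_of_le₀ hsρ hρ.le
  refine ⟨AffineMap.lineMap q c (s / ρ), ?_, Metric.closedBall_subset_closedBall' ?_⟩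
  · rw [Metric.mem_closedBall, dist_comm, dist_lineMap_left, Real.norm_of_nonneg ht₀]
    calc s / ρ * dist q c ≤ s / ρ * ρ := by gcongr
      _ = s := div_mul_cancel₀ s hρ.ne'
  · rw [dist_lineMap_right, Real.norm_of_nonneg (sub_nonneg.2 ht₁)]
    calc s + (1 - s / ρ) * dist q c ≤ s + (1 - s / ρ) * ρ := by gcongr
      _ = ρ := by field_simp; ring

theorem EuclideanSpace.dist_le_sqrt_mul {d : ℕ} {x y : EuclideanSpace ℝ (Fin d)} {w : ℝ}
    (hw : 0 ≤ w) (h : ∀ m, |x m - y m| ≤ w) : dist x y ≤ √d * w := by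
  have h_sup : dist (WithLp.ofLp x) (WithLp.ofLp y) ≤ w :=
    (dist_pi_le_iff hw).2 fun m => by simpa [Real.dist_eq] using h m
  calc dist x y ≤ (d : ℝ) ^ (1 / 2 : ℝ) * dist (WithLp.ofLp x) (WithLp.ofLp y) := by
        simpa using (PiLp.antilipschitzWith_ofLp 2 (fun _ : Fin d => ℝ)).le_mul_dist x y
    _ ≤ √d * w := by rw [← Real.sqrt_eq_rpow]; gcongr

theorem mem_cube_of_dist_le {d : ℕ} {x q y : EuclideanSpace ℝ (Fin d)} {r t : ℝ}
    (hq : q ∈ cube d x r) (hy : dist y q ≤ t) :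
    y ∈ cube d (WithLp.toLp 2 fun m => x m - t) (r + 2 * t) := fun m => by
  have h := abs_le.1 (((Real.dist_eq _ _).symm.le.trans (PiLp.dist_apply_le y q m)).trans hy)
  have := hq m
  constructor <;> linarith [h.1, h.2]

theorem objSize_closedBall_le {d : ℕ} (c : EuclideanSpace ℝ (Fin d)) {ρ : ℝ} (hρ : 0 ≤ ρ) :
    objSize d (Metric.closedBall c ρ) ≤ 2 * ρ := by
  have hc : c ∈ cube d c 0 := fun m => ⟨le_rfl, by simp⟩
  refine csInf_le ⟨0, fun _ h => h.1⟩
    ⟨by positivity, WithLp.toLp 2 fun m => c m - ρ, fun y hy => ?_⟩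
  simpa using mem_cube_of_dist_le hc hy

/-- The index of the unit cell `[n, n + 1]` of `[0, k]` containing `u`; `u = k` falls in the
last cell. -/
noncomputable def cellIndex (k : ℕ) (u : ℝ) : ℕ := min (k - 1) ⌊u⌋₊

theorem cellIndex_lt {k : ℕ} (hk : 0 < k) (u : ℝ) : cellIndex k u < k :=
  (min_le_left _ _).trans_lt (Nat.sub_lt hk one_pos)

theorem cellIndex_le_and_le_cellIndex_add_one {k : ℕ} {u : ℝ} (hu₀ : 0 ≤ u) (huk : u ≤ k) :
    (cellIndex k u : ℝ) ≤ u ∧ u ≤ cellIndex k u + 1 := by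
  refine ⟨(Nat.cast_le.2 (min_le_right _ _)).trans (Nat.floor_le hu₀), ?_⟩
  rcases le_total ⌊u⌋₊ (k - 1) with h | h
  · rw [cellIndex, min_eq_right h]
    exact (Nat.lt_floor_add_one u).le
  · rw [cellIndex, min_eq_left h]
    exact huk.trans (by exact_mod_cast (by omega : k ≤ k - 1 + 1))

theorem abs_sub_le_one_of_cellIndex_eq {k : ℕ} {u v : ℝ} (hu₀ : 0 ≤ u) (huk : u ≤ k)
    (hv₀ : 0 ≤ v) (hvk : v ≤ k) (h : cellIndex k u = cellIndex k v) : |u - v| ≤ 1 := by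
  have hu := cellIndex_le_and_le_cellIndex_add_one hu₀ huk
  have hv := cellIndex_le_and_le_cellIndex_add_one hv₀ hvk
  rw [h] at hu
  exact abs_sub_le_iff.2 ⟨by linarith, by linarith⟩

theorem card_le_pow_of_mem_cube_of_lt_dist {ι : Type*} {d k : ℕ} (hk : 0 < k)
    {a : EuclideanSpace ℝ (Fin d)} {s : ℝ} (hs : 0 < s) {f : ι → EuclideanSpace ℝ (Fin d)}
    {P : Finset ι} (hf : ∀ i ∈ P, f i ∈ cube d a s)
    (hsep : ∀ i ∈ P, ∀ j ∈ P, i ≠ j → √d * (s / k) < dist (f i) (f j)) : P.card ≤ k ^ d := by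
  set w := s / k
  have hw : 0 < w := by positivity
  have hu : ∀ i ∈ P, ∀ m, 0 ≤ (f i m - a m) / w ∧ (f i m - a m) / w ≤ k := fun i hi m => by
    have := hf i hi m
    refine ⟨div_nonneg (by linarith) hw.le, (div_le_iff₀ hw).2 ?_⟩
    rw [mul_div_cancel₀ s (by positivity)]
    linarith
  let F : ι → Fin d → ℕ := fun i m => cellIndex k ((f i m - a m) / w)
  have hF : ∀ i ∈ P, F i ∈ Fintype.piFinset fun _ => Finset.range k := fun i _ => by
    simpa [F] using fun m => cellIndex_lt hk _
  have hinj : Set.InjOn F P := by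
    intro i hi j hj hij
    by_contra hne
    refine (hsep i hi j hj hne).not_ge (EuclideanSpace.dist_le_sqrt_mul hw.le fun m => ?_)
    have := abs_sub_le_one_of_cellIndex_eq (hu i hi m).1 (hu i hi m).2 (hu j hj m).1
      (hu j hj m).2 (congrFun hij m)
    rwa [← sub_div, sub_sub_sub_cancel_right, abs_div, abs_of_pos hw, div_le_one hw] at this
  calc P.card ≤ (Fintype.piFinset fun _ : Fin d => Finset.range k).card :=
        Finset.card_le_card_of_injOn F hF hinj
    _ = k ^ d := by simp

theorem card_le_of_pairwise_disjoint_closedBall_inter_cube {ι : Type*} {d : ℕ} (hd : 1 ≤ d)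
    {ctr : ι → EuclideanSpace ℝ (Fin d)} {rad : ι → ℝ} {r : ℝ} (hr : 0 < r)
    {x : EuclideanSpace ℝ (Fin d)} {P : Finset ι}
    (hdisj : ∀ i ∈ P, ∀ j ∈ P, i ≠ j →
      Disjoint (Metric.closedBall (ctr i) (rad i)) (Metric.closedBall (ctr j) (rad j)))
    (hmeet : ∀ i ∈ P, (Metric.closedBall (ctr i) (rad i) ∩ cube d x r).Nonempty ∧
      r ≤ 2 * rad i) :
    (P.card : ℝ) ≤ 3 ^ d * d.factorial := by
  have h_shrink : ∀ i ∈ P, ∃ c, (∃ q ∈ cube d x r, q ∈ Metric.closedBall c (r / 2)) ∧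
      Metric.closedBall c (r / 2) ⊆ Metric.closedBall (ctr i) (rad i) := fun i hi => by
    obtain ⟨⟨q, hq_ball, hq_cube⟩, hr_rad⟩ := hmeet i hi
    obtain ⟨c, hqc, hc⟩ :=
      exists_closedBall_subset_closedBall_of_mem hq_ball (s := r / 2) (by positivity) (by linarith)
    exact ⟨c, ⟨q, hq_cube, hqc⟩, hc⟩
  choose! c hc_near hc_sub using h_shrink
  set k := ⌈2 * √(d : ℝ)⌉₊
  have hk : 2 * √(d : ℝ) ≤ k := Nat.le_ceil _
  have hk₀ : 0 < k := Nat.cast_pos.1 <| (by positivity : (0 : ℝ) < 2 * √(d : ℝ)).trans_le hk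
  have h_card : P.card ≤ k ^ d := by
    refine card_le_pow_of_mem_cube_of_lt_dist hk₀ (s := 2 * r) (f := c) (by positivity)
      (a := WithLp.toLp 2 fun m => x m - r / 2) (fun i hi => ?_) (fun i hi j hj hij => ?_)
    · obtain ⟨q, hq, hqc⟩ := hc_near i hi
      convert mem_cube_of_dist_le hq (Metric.mem_closedBall'.1 hqc) using 2
      ring
    · have h_far := (disjoint_closedBall_closedBall_iff (by positivity) (by positivity)).1
        ((hdisj i hi j hj hij).mono (hc_sub i hi) (hc_sub j hj))
      calc √d * (2 * r / k) ≤ r := by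
            rw [mul_div_assoc', div_le_iff₀ (by positivity)]
            nlinarith
        _ = r / 2 + r / 2 := by ring
        _ < dist (c i) (c j) := h_far
  calc (P.card : ℝ) ≤ (k : ℝ) ^ d := by exact_mod_cast h_card
    _ ≤ 3 ^ d * d.factorial := ceil_two_mul_sqrt_pow_le hd

theorem stmt11_general {ι : Type} (d : ℕ) (hd : 2 ≤ d)
    (ctr : ι → EuclideanSpace ℝ (Fin d)) (rad : ι → ℝ) (hrad : ∀ i, 0 < rad i) :
    IsFat d ((3 : ℝ) ^ d * (Nat.factorial d : ℝ))
      (fun i => Metric.closedBall (ctr i) (rad i)) ∧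
    ∀ r : ℝ, 0 < r → ∀ x : EuclideanSpace ℝ (Fin d), ∀ P : Finset ι,
      (∀ i ∈ P, ∀ j ∈ P, i ≠ j →
        Disjoint (Metric.closedBall (ctr i) (rad i)) (Metric.closedBall (ctr j) (rad j))) →
      (∀ i ∈ P, (Metric.closedBall (ctr i) (rad i) ∩ cube d x r).Nonempty ∧ r ≤ 2 * rad i) →
      (P.card : ℝ) ≤ (3 : ℝ) ^ d * (Nat.factorial d : ℝ) := by
  have h_one : 1 ≤ d := by omega
  refine ⟨fun r hr x P hdisj hmeet => ⟨P.image ctr, ?_, fun i hi => ?_⟩,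
    fun r hr x P => card_le_of_pairwise_disjoint_closedBall_inter_cube h_one hr⟩
  · refine le_trans (by exact_mod_cast Finset.card_image_le)
      (card_le_of_pairwise_disjoint_closedBall_inter_cube h_one hr (x := x) hdisj fun i hi => ?_)
    exact ⟨(hmeet i hi).1, (hmeet i hi).2.trans (objSize_closedBall_le _ (hrad i).le)⟩
  · exact ⟨ctr i, Finset.mem_image_of_mem ctr hi, Metric.mem_closedBall_self (hrad i).le⟩

/-- Every finite collection of closed balls in `ℝ^d` (`d ≥ 2`) is `3^d·d!`-fat;
in particular any pairwise disjoint subcollection of balls of diameter at least `r` meeting a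
size-`r` hypercube has at most `3^d·d!` members. -/
theorem stmt11 {ι : Type} [Fintype ι] (d : ℕ) (hd : 2 ≤ d)
    (ctr : ι → EuclideanSpace ℝ (Fin d)) (rad : ι → ℝ) (hrad : ∀ i, 0 < rad i) :
    IsFat d ((3 : ℝ) ^ d * (Nat.factorial d : ℝ))
      (fun i => Metric.closedBall (ctr i) (rad i)) ∧
    ∀ r : ℝ, 0 < r → ∀ x : EuclideanSpace ℝ (Fin d), ∀ P : Finset ι,
      (∀ i ∈ P, ∀ j ∈ P, i ≠ j →
        Disjoint (Metric.closedBall (ctr i) (rad i)) (Metric.closedBall (ctr j) (rad j))) →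
      (∀ i ∈ P, (Metric.closedBall (ctr i) (rad i) ∩ cube d x r).Nonempty ∧ r ≤ 2 * rad i) →
      (P.card : ℝ) ≤ (3 : ℝ) ^ d * (Nat.factorial d : ℝ) :=
  stmt11_general d hd ctr rad hrad
end
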